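/- For every (a,b) in the parameter set P = {(a,b) ∈ (1,2] × [1,2] : ab ≤ 2}, the point P_{a,b} = ((ab + 2a² − a²b)/(1+a²), (ab − 2a + a²b)/(1+a²)) is a fixed point of the map Ψ_{a,b}, and it lies in the region T₁⁺, i.e. its first coordinate x satisfies 1 ≤ x ≤ 2 and x − y ≤ 2 − b where y is its second coordinate. -/

import Mathlib

/-!
On `T₁⁺` the map is the affine map `(x, y) ↦ (a(b - y), a(b - 2 + x))`, and `P_{a,b}` is the
solution of the linear system `x = a(b - y)`, `y = a(b - 2 + x)`. Once multiplied by `1 + a²`,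
the slacks of the three inequalities locating `P_{a,b}` in `T₁⁺` factor as
`(a - 1)(a + 1 - ab)`, `2 + ab(a - 1)` and `(a - 1)((a + 1)b - 2)`, all positive when
`1 < a`, `1 ≤ b` and `ab ≤ 2`.
-/

/-- The piecewise map Ψ_{a,b} on the triangle T. -/
noncomputable def Psi (a b : ℝ) (p : ℝ × ℝ) : ℝ × ℝ :=
  if p.1 ≤ 1 then
    if p.1 + p.2 ≤ b then (a * p.1, a * p.2) else (a * (b - p.2), a * (b - p.1))
  else
    if 2 - b ≤ p.1 - p.2 then (a * (2 - p.1), a * p.2)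
    else (a * (b - p.2), a * (b - 2 + p.1))

lemma Psi_of_one_lt_of_sub_lt {a b : ℝ} {p : ℝ × ℝ} (h₁ : 1 < p.1) (h₂ : p.1 - p.2 < 2 - b) :
    Psi a b p = (a * (b - p.2), a * (b - 2 + p.1)) := by
  simp only [Psi, if_neg (not_le.mpr h₁), if_neg (not_le.mpr h₂)]

/-- The point `P_{a,b}`. -/
noncomputable def fixedPt (a b : ℝ) : ℝ × ℝ :=
  ((a * b + 2 * a ^ 2 - a ^ 2 * b) / (1 + a ^ 2), (a * b - 2 * a + a ^ 2 * b) / (1 + a ^ 2))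

section fixedPt

variable (a b : ℝ)

lemma one_add_sq_ne_zero : (1 : ℝ) + a ^ 2 ≠ 0 := by positivity

lemma fixedPt_fst_sub_one :
    (fixedPt a b).1 - 1 = (a - 1) * (a + 1 - a * b) / (1 + a ^ 2) := by
  unfold fixedPt
  field_simp [one_add_sq_ne_zero a]
  ring

lemma two_sub_fixedPt_fst :
    2 - (fixedPt a b).1 = (2 + a * b * (a - 1)) / (1 + a ^ 2) := by
  unfold fixedPt
  field_simp [one_add_sq_ne_zero a]
  ring

lemma two_sub_sub_fixedPt_fst_sub_snd :
    2 - b - ((fixedPt a b).1 - (fixedPt a b).2) = (a - 1) * ((a + 1) * b - 2) / (1 + a ^ 2) := by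
  unfold fixedPt
  field_simp [one_add_sq_ne_zero a]
  ring

lemma mul_sub_fixedPt_snd : a * (b - (fixedPt a b).2) = (fixedPt a b).1 := by
  unfold fixedPt
  field_simp [one_add_sq_ne_zero a]
  ring

lemma mul_sub_add_fixedPt_fst : a * (b - 2 + (fixedPt a b).1) = (fixedPt a b).2 := by
  unfold fixedPt
  field_simp [one_add_sq_ne_zero a]
  ring

end fixedPt

section location

variable {a b : ℝ}

lemma one_lt_fixedPt_fst (ha : 1 < a) (hab : a * b ≤ 2) : 1 < (fixedPt a b).1 := by
  have : 0 < a + 1 - a * b := by linarith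
  rw [← sub_pos, fixedPt_fst_sub_one]
  positivity

lemma fixedPt_fst_le_two (ha : 1 ≤ a) (hb : 0 ≤ b) : (fixedPt a b).1 ≤ 2 := by
  rw [← sub_nonneg, two_sub_fixedPt_fst]
  positivity

lemma fixedPt_fst_sub_snd_lt (ha : 1 < a) (hb : 1 ≤ b) :
    (fixedPt a b).1 - (fixedPt a b).2 < 2 - b := by
  have : 0 < (a + 1) * b - 2 := by nlinarith
  rw [← sub_pos, two_sub_sub_fixedPt_fst_sub_snd]
  positivity

lemma Psi_fixedPt (ha : 1 < a) (hb : 1 ≤ b) (hab : a * b ≤ 2) :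
    Psi a b (fixedPt a b) = fixedPt a b := by
  rw [Psi_of_one_lt_of_sub_lt (one_lt_fixedPt_fst ha hab) (fixedPt_fst_sub_snd_lt ha hb),
    mul_sub_fixedPt_snd, mul_sub_add_fixedPt_fst]

end location

theorem fixed_point_in_T1plus (a b : ℝ) (ha1 : 1 < a)
    (hb1 : 1 ≤ b) (hab : a * b ≤ 2) :
    Psi a b ((a * b + 2 * a ^ 2 - a ^ 2 * b) / (1 + a ^ 2),
             (a * b - 2 * a + a ^ 2 * b) / (1 + a ^ 2)) =
      ((a * b + 2 * a ^ 2 - a ^ 2 * b) / (1 + a ^ 2),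
       (a * b - 2 * a + a ^ 2 * b) / (1 + a ^ 2)) ∧
    1 ≤ (a * b + 2 * a ^ 2 - a ^ 2 * b) / (1 + a ^ 2) ∧
    (a * b + 2 * a ^ 2 - a ^ 2 * b) / (1 + a ^ 2) ≤ 2 ∧
    (a * b + 2 * a ^ 2 - a ^ 2 * b) / (1 + a ^ 2) -
      (a * b - 2 * a + a ^ 2 * b) / (1 + a ^ 2) ≤ 2 - b :=
  ⟨Psi_fixedPt ha1 hb1 hab, (one_lt_fixedPt_fst ha1 hab).le,
    fixedPt_fst_le_two ha1.le (by linarith), (fixedPt_fst_sub_snd_lt ha1 hb1).le⟩
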